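/- Let R be a Borel measure on ℝ^d with R({0}) = 0 and ∫_{ℝ^d} (|x|² ∧ 1) R(dx) < ∞ and ∫_{|x|>1} log|x| R(dx) < ∞ (class 𝔐^log). Define R^log({0}) = 0 and R^log(A) = ∫ 1_A(x/|x|²) |x|² (1 + |log|x||)^{κ(|x|)} R(dx), where κ(t) = 1 for t ≥ 1 and κ(t) = -1 for t ∈ [0,1). Then R^log ∈ 𝔐^log and (R^log)^log = R. -/

import Mathlib

open MeasureTheory ENNReal Filter Topology Set

noncomputable section

abbrev Rd (d : ℕ) := EuclideanSpace ℝ (Fin d)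

/-- The spherical inversion map `x ↦ x / |x|²` (sending `0` to `0`). -/
def sphInv {d : ℕ} (x : Rd d) : Rd d := (‖x‖ ^ 2)⁻¹ • x

/-- The β-inversion of a measure `M`:
`M^β(A) = ∫ 1_A(x/|x|²) |x|^{2+β} M(dx)`. -/
def betaInv {d : ℕ} (β : ℝ) (M : Measure (Rd d)) : Measure (Rd d) :=
  Measure.map sphInv (M.withDensity fun x => ENNReal.ofReal (‖x‖ ^ (2 + β)))

/-- `M ∈ 𝔐^β`: `M({0}) = 0` and `∫ (|x|² ∧ |x|^β) M(dx) < ∞`. -/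
def MemM {d : ℕ} (β : ℝ) (M : Measure (Rd d)) : Prop :=
  M {0} = 0 ∧ ∫⁻ x, ENNReal.ofReal (min (‖x‖ ^ (2 : ℝ)) (‖x‖ ^ β)) ∂M < ⊤

/-- `κ(t) = 1` for `t ≥ 1` and `κ(t) = -1` for `t < 1`. -/
def kappa (t : ℝ) : ℝ := if 1 ≤ t then 1 else -1

/-- `R ∈ 𝔐^log`: `R({0}) = 0`, `∫ (|x|² ∧ 1) R(dx) < ∞`, and
`∫_{|x|>1} log|x| R(dx) < ∞`. -/
def MemMlog {d : ℕ} (R : Measure (Rd d)) : Prop :=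
  R {0} = 0 ∧ (∫⁻ x, ENNReal.ofReal (min (‖x‖ ^ (2 : ℝ)) 1) ∂ R < ⊤) ∧
    ∫⁻ x in {x : Rd d | 1 < ‖x‖}, ENNReal.ofReal (Real.log ‖x‖) ∂ R < ⊤

/-- The log-inversion: `R^log(A) = ∫ 1_A(x/|x|²) |x|² (1+|log|x||)^{κ(|x|)} R(dx)`. -/
def logInv {d : ℕ} (R : Measure (Rd d)) : Measure (Rd d) :=
  Measure.map sphInv (R.withDensity fun x =>
    ENNReal.ofReal (‖x‖ ^ (2 : ℝ) * (1 + |Real.log ‖x‖|) ^ kappa ‖x‖))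

/-!
The density `g(x) = |x|² (1 + |log|x||)^{κ(|x|)}` satisfies `g(x) g(x/|x|²) = 1`, because the
inversion exchanges `|x| < 1` and `|x| > 1` and preserves `|log|x||`. Since the inversion is an
involution, applying the log-inversion twice multiplies `R` by this product, which is `1` off the
`R`-null set `{0}`. For the integrability conditions, pull the integrands back along the inversion:
`min(|x|⁻², 1) g(x)` is `1 + log|x|` for `|x| ≥ 1` and at most `|x|²` for `|x| < 1`, while
`log⁺(1/|x|) g(x) = |x|² |log|x|| / (1 + |log|x||) ≤ |x|²` for `|x| < 1` and vanishes otherwise.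
-/

namespace MeasureTheory.Measure

variable {α β : Type*} [MeasurableSpace α] [MeasurableSpace β]

theorem withDensity_map (μ : Measure α) {f : α → β} (hf : Measurable f) {g : β → ℝ≥0∞}
    (hg : Measurable g) : (μ.map f).withDensity g = (μ.withDensity (g ∘ f)).map f := by
  ext s hs
  rw [withDensity_apply _ hs, map_apply hf hs, withDensity_apply _ (hf hs),
    setLIntegral_map hs hg hf]
  rfl

theorem map_withDensity_map_withDensity_of_involutive (μ : Measure α) {σ : α → α}
    (hσ : Measurable σ) (hσσ : Function.Involutive σ) {g : α → ℝ≥0∞} (hg : Measurable g)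
    (hgσ : ∀ᵐ x ∂μ, g x * g (σ x) = 1) :
    (((μ.withDensity g).map σ).withDensity g).map σ = μ := by
  have hprod : g * (g ∘ σ) =ᵐ[μ] 1 := hgσ
  rw [withDensity_map _ hσ hg, map_map hσ hσ, hσσ.comp_self, map_id,
    ← withDensity_mul μ hg (hg.comp hσ), withDensity_congr_ae hprod, withDensity_one]

end MeasureTheory.Measure

theorem setLIntegral_one_lt_norm_ofReal_log {E : Type*} [NormedAddCommGroup E]
    [MeasurableSpace E] (μ : Measure E) :
    ∫⁻ x in {x : E | 1 < ‖x‖}, ENNReal.ofReal (Real.log ‖x‖) ∂μ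
      = ∫⁻ x, ENNReal.ofReal (Real.posLog ‖x‖) ∂μ := by
  rw [setLIntegral_eq_of_support_subset]
  · simp [Real.posLog]
  · intro x hx
    have hlog : 0 < Real.log ‖x‖ := by simpa using hx
    exact (Real.log_pos_iff (norm_nonneg x)).1 hlog

section sphInv

variable {d : ℕ}

theorem sphInv_eq_inversion : sphInv = EuclideanGeometry.inversion (0 : Rd d) 1 := by
  ext1 x
  simp [sphInv, EuclideanGeometry.inversion]

theorem sphInv_involutive : Function.Involutive (sphInv (d := d)) := by
  rw [sphInv_eq_inversion]
  exact EuclideanGeometry.inversion_involutive _ one_ne_zero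

theorem norm_sphInv (x : Rd d) : ‖sphInv x‖ = ‖x‖⁻¹ := by
  simpa [sphInv_eq_inversion] using EuclideanGeometry.dist_inversion_center (0 : Rd d) x 1

theorem sphInv_eq_zero {x : Rd d} : sphInv x = 0 ↔ x = 0 := by
  rw [sphInv_eq_inversion]
  exact EuclideanGeometry.inversion_eq_center one_ne_zero

theorem measurable_sphInv : Measurable (sphInv (d := d)) :=
  ((measurable_norm.pow_const 2).inv).smul measurable_id

end sphInv

def logDensity (r : ℝ) : ℝ := r ^ (2 : ℝ) * (1 + |Real.log r|) ^ kappa r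

theorem measurable_logDensity : Measurable logDensity := by
  have hκ : Measurable kappa := Measurable.ite measurableSet_Ici measurable_const measurable_const
  unfold logDensity
  fun_prop

theorem logDensity_of_one_le {r : ℝ} (h : 1 ≤ r) : logDensity r = r ^ 2 * (1 + Real.log r) := by
  rw [logDensity, kappa, if_pos h, Real.rpow_one, Real.rpow_two,
    abs_of_nonneg (Real.log_nonneg h)]

theorem logDensity_of_lt_one {r : ℝ} (h : r < 1) :
    logDensity r = r ^ 2 / (1 + |Real.log r|) := by
  rw [logDensity, kappa, if_neg (not_le.2 h), Real.rpow_neg_one, Real.rpow_two, div_eq_mul_inv]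

theorem logDensity_nonneg {r : ℝ} (hr : 0 ≤ r) : 0 ≤ logDensity r := by
  unfold logDensity
  positivity

theorem logDensity_mul_logDensity_inv {r : ℝ} (hr : 0 < r) : logDensity r * logDensity r⁻¹ = 1 := by
  have key : ∀ {s : ℝ}, 0 < s → s < 1 → logDensity s * logDensity s⁻¹ = 1 := by
    intro s hs hs1
    have hlog : Real.log s⁻¹ = |Real.log s| := by
      rw [Real.log_inv, abs_of_neg (Real.log_neg hs hs1)]
    rw [logDensity_of_lt_one hs1, logDensity_of_one_le (one_le_inv₀ hs |>.2 hs1.le), hlog]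
    field_simp
  rcases lt_trichotomy r 1 with h | rfl | h
  · exact key hr h
  · simp [logDensity, kappa]
  · simpa [mul_comm] using key (inv_pos.2 hr) (inv_lt_one_of_one_lt₀ h)

theorem min_inv_sq_one_mul_logDensity_le {r : ℝ} (hr : 0 ≤ r) :
    min (r⁻¹ ^ 2) 1 * logDensity r ≤ min (r ^ 2) 1 + Real.posLog r := by
  rcases le_or_gt 1 r with h | h
  · have hr0 : 0 < r := one_pos.trans_le h
    have hsq : r⁻¹ ^ 2 ≤ 1 := pow_le_one₀ (inv_nonneg.2 hr) (inv_le_one_of_one_le₀ h)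
    rw [min_eq_left hsq, min_eq_right (one_le_pow₀ h), logDensity_of_one_le h,
      Real.posLog_eq_log (by rwa [abs_of_nonneg hr])]
    refine le_of_eq ?_
    field_simp
  · have hle : logDensity r ≤ r ^ 2 := by
      rw [logDensity_of_lt_one h]
      exact div_le_self (sq_nonneg r) (by simp)
    calc min (r⁻¹ ^ 2) 1 * logDensity r ≤ 1 * logDensity r :=
          mul_le_mul_of_nonneg_right (min_le_right _ _) (logDensity_nonneg hr)
      _ ≤ min (r ^ 2) 1 := by
          rw [one_mul]
          exact le_min hle (hle.trans (pow_le_one₀ hr h.le))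
      _ ≤ min (r ^ 2) 1 + Real.posLog r := le_add_of_nonneg_right Real.posLog_nonneg

theorem posLog_inv_mul_logDensity_le {r : ℝ} (hr : 0 ≤ r) :
    Real.posLog r⁻¹ * logDensity r ≤ min (r ^ 2) 1 := by
  rcases le_or_gt 1 r with h | h
  · rw [(Real.posLog_eq_zero_iff _).2, zero_mul]
    · exact le_min (sq_nonneg r) zero_le_one
    · rw [abs_of_nonneg (inv_nonneg.2 hr)]
      exact inv_le_one_of_one_le₀ h
  · have hposLog_le : Real.posLog r⁻¹ ≤ |Real.log r| := by
      rw [Real.posLog_apply, Real.log_inv]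
      exact max_le (abs_nonneg _) (neg_le_abs _)
    have hle : Real.posLog r⁻¹ * logDensity r ≤ r ^ 2 := by
      rw [logDensity_of_lt_one h]
      calc Real.posLog r⁻¹ * (r ^ 2 / (1 + |Real.log r|))
          ≤ |Real.log r| * (r ^ 2 / (1 + |Real.log r|)) := by gcongr
        _ = r ^ 2 * (|Real.log r| / (1 + |Real.log r|)) := by ring
        _ ≤ r ^ 2 * 1 := by
            gcongr
            exact div_le_one_of_le₀ (by linarith) (by positivity)
        _ = r ^ 2 := mul_one _
    exact le_min hle (hle.trans (pow_le_one₀ hr h.le))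

section logInv

variable {d : ℕ}

theorem logInv_eq_map_withDensity (R : Measure (Rd d)) :
    logInv R = (R.withDensity fun x => ENNReal.ofReal (logDensity ‖x‖)).map sphInv := rfl

theorem measurable_ofReal_logDensity_norm :
    Measurable fun x : Rd d => ENNReal.ofReal (logDensity ‖x‖) :=
  (measurable_logDensity.comp measurable_norm).ennreal_ofReal

theorem lintegral_logInv (R : Measure (Rd d)) {F : Rd d → ℝ≥0∞} (hF : Measurable F) :
    ∫⁻ y, F y ∂(logInv R) = ∫⁻ x, F (sphInv x) * ENNReal.ofReal (logDensity ‖x‖) ∂ R := by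
  rw [logInv_eq_map_withDensity, lintegral_map hF measurable_sphInv,
    lintegral_withDensity_eq_lintegral_mul _ measurable_ofReal_logDensity_norm
      (g := fun x => F (sphInv x)) (hF.comp measurable_sphInv)]
  exact lintegral_congr fun x => mul_comm _ _

theorem logInv_singleton_zero {R : Measure (Rd d)} (h0 : R {0} = 0) : logInv R {0} = 0 := by
  have hpre : sphInv ⁻¹' ({0} : Set (Rd d)) = {0} := by
    ext x
    simp [sphInv_eq_zero]
  rw [logInv_eq_map_withDensity, Measure.map_apply measurable_sphInv (measurableSet_singleton 0),
    hpre, withDensity_apply _ (measurableSet_singleton 0), setLIntegral_measure_zero _ _ h0]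

theorem logInv_logInv {R : Measure (Rd d)} (h0 : R {0} = 0) : logInv (logInv R) = R := by
  rw [logInv_eq_map_withDensity, logInv_eq_map_withDensity]
  refine Measure.map_withDensity_map_withDensity_of_involutive R measurable_sphInv
    sphInv_involutive measurable_ofReal_logDensity_norm ?_
  filter_upwards [measure_eq_zero_iff_ae_notMem.1 h0] with x hx
  have hr : 0 < ‖x‖ := norm_pos_iff.2 (by simpa using hx)
  rw [norm_sphInv, ← ENNReal.ofReal_mul (logDensity_nonneg hr.le),
    logDensity_mul_logDensity_inv hr, ENNReal.ofReal_one]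

theorem lintegral_min_sq_one_logInv_le (R : Measure (Rd d)) :
    ∫⁻ x, ENNReal.ofReal (min (‖x‖ ^ (2 : ℝ)) 1) ∂(logInv R)
      ≤ ∫⁻ x, ENNReal.ofReal (min (‖x‖ ^ (2 : ℝ)) 1) ∂ R
        + ∫⁻ x, ENNReal.ofReal (Real.posLog ‖x‖) ∂ R := by
  simp only [Real.rpow_two]
  rw [lintegral_logInv R (by fun_prop), ← lintegral_add_left (by fun_prop)]
  refine lintegral_mono fun x => ?_
  rw [norm_sphInv, ← ENNReal.ofReal_mul (by positivity)]
  exact (ENNReal.ofReal_le_ofReal (min_inv_sq_one_mul_logDensity_le (norm_nonneg x))).trans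
    ENNReal.ofReal_add_le

theorem lintegral_posLog_logInv_le (R : Measure (Rd d)) :
    ∫⁻ x, ENNReal.ofReal (Real.posLog ‖x‖) ∂(logInv R)
      ≤ ∫⁻ x, ENNReal.ofReal (min (‖x‖ ^ (2 : ℝ)) 1) ∂ R := by
  simp only [Real.rpow_two]
  rw [lintegral_logInv R (by fun_prop)]
  refine lintegral_mono fun x => ?_
  rw [norm_sphInv, ← ENNReal.ofReal_mul Real.posLog_nonneg]
  exact ENNReal.ofReal_le_ofReal (posLog_inv_mul_logDensity_le (norm_nonneg x))

end logInv

theorem stmt17 {d : ℕ} (R : Measure (Rd d)) (hR : MemMlog R) :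
    MemMlog (logInv R) ∧ logInv (logInv R) = R := by
  obtain ⟨h0, hsq, hlog⟩ := hR
  rw [setLIntegral_one_lt_norm_ofReal_log] at hlog
  refine ⟨⟨logInv_singleton_zero h0, ?_, ?_⟩, logInv_logInv h0⟩
  · exact (lintegral_min_sq_one_logInv_le R).trans_lt (ENNReal.add_lt_top.2 ⟨hsq, hlog⟩)
  · rw [setLIntegral_one_lt_norm_ofReal_log]
    exact (lintegral_posLog_logInv_le R).trans_lt hsq
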